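/- Let p, q be positive real numbers with q ≤ p and p² < √2·q² < 2√2·p². For real m with q² ≤ m ≤ p² define k(m) := (4 − 2p⁴q²/m³)/(4 + 4p⁴q²/m³). Then for every such m: 1/4 − (3/4)·(p⁴ − q⁴)/(p⁴ + q⁴) ≤ k(m) ≤ 1/4 + (3/4)·(p² − q²)/(p² + q²). -/

import Mathlib

/-! With `t = p⁴q²/m³` the ratio is `k = (4 - 2t)/(4 + 4t)`, a decreasing function of `t`.
As `m` runs over `[q², p²]`, `t` runs over `[q²/p², p⁴/q⁴]`, and the two bounds are exactly the
values of `k` at the endpoints `m = p²` and `m = q²`. -/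

open Set

noncomputable def pinchingRatio (t : ℝ) : ℝ := (4 - 2 * t) / (4 + 4 * t)

theorem antitoneOn_pinchingRatio : AntitoneOn pinchingRatio (Ioi (-1)) := by
  intro s hs t ht hst
  simp only [mem_Ioi] at hs ht
  rw [pinchingRatio, pinchingRatio, div_le_div_iff₀ (by linarith) (by linarith)]
  nlinarith

theorem pinchingRatio_div {a b : ℝ} (hb : b ≠ 0) (hab : b + a ≠ 0) :
    pinchingRatio (a / b) = 1 / 4 + 3 / 4 * ((b - a) / (b + a)) := by
  rw [pinchingRatio]
  field_simp
  ring

theorem div_le_mul_div_pow_three {p q m : ℝ} (hq : q ≠ 0) (hqm : q ^ 2 ≤ m) (hmp : m ≤ p ^ 2) :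
    q ^ 2 / p ^ 2 ≤ p ^ 4 * q ^ 2 / m ^ 3 := by
  have hm : 0 < m := lt_of_lt_of_le (by positivity) hqm
  calc q ^ 2 / p ^ 2 = p ^ 4 * q ^ 2 / (p ^ 2) ^ 3 := by
        field_simp [(hm.trans_le hmp).ne']
    _ ≤ p ^ 4 * q ^ 2 / m ^ 3 := by gcongr

theorem mul_div_pow_three_le_div (p : ℝ) {q m : ℝ} (hq : q ≠ 0) (hqm : q ^ 2 ≤ m) :
    p ^ 4 * q ^ 2 / m ^ 3 ≤ p ^ 4 / q ^ 4 := by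
  have hq2 : 0 < q ^ 2 := by positivity
  calc p ^ 4 * q ^ 2 / m ^ 3 ≤ p ^ 4 * q ^ 2 / (q ^ 2) ^ 3 := by gcongr
    _ = p ^ 4 / q ^ 4 := by field_simp

theorem pinching_bounds_q_le_p_general (p q : ℝ) (hq : 0 < q) :
    ∀ m : ℝ, q ^ 2 ≤ m → m ≤ p ^ 2 →
      1 / 4 - 3 / 4 * ((p ^ 4 - q ^ 4) / (p ^ 4 + q ^ 4))
          ≤ (4 - 2 * p ^ 4 * q ^ 2 / m ^ 3) / (4 + 4 * p ^ 4 * q ^ 2 / m ^ 3) ∧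
      (4 - 2 * p ^ 4 * q ^ 2 / m ^ 3) / (4 + 4 * p ^ 4 * q ^ 2 / m ^ 3)
          ≤ 1 / 4 + 3 / 4 * ((p ^ 2 - q ^ 2) / (p ^ 2 + q ^ 2)) := by
  intro m hqm hmp
  have hk : (4 - 2 * p ^ 4 * q ^ 2 / m ^ 3) / (4 + 4 * p ^ 4 * q ^ 2 / m ^ 3)
      = pinchingRatio (p ^ 4 * q ^ 2 / m ^ 3) := by
    rw [pinchingRatio]; ring
  have hp2 : 0 < p ^ 2 := (pow_pos hq 2).trans_le (hqm.trans hmp)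
  have hlow := div_le_mul_div_pow_three hq.ne' hqm hmp
  have hupp := mul_div_pow_three_le_div p hq.ne' hqm
  have hlow_mem : q ^ 2 / p ^ 2 ∈ Ioi (-1 : ℝ) :=
    mem_Ioi.mpr (lt_of_lt_of_le (by norm_num) (by positivity : (0 : ℝ) ≤ q ^ 2 / p ^ 2))
  have hmem : p ^ 4 * q ^ 2 / m ^ 3 ∈ Ioi (-1 : ℝ) := lt_of_lt_of_le hlow_mem hlow
  have hupp_mem : p ^ 4 / q ^ 4 ∈ Ioi (-1 : ℝ) := lt_of_lt_of_le hmem hupp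
  rw [hk]
  constructor
  · calc 1 / 4 - 3 / 4 * ((p ^ 4 - q ^ 4) / (p ^ 4 + q ^ 4))
          = pinchingRatio (p ^ 4 / q ^ 4) := by
            rw [pinchingRatio_div (by positivity) (by positivity)]; ring
      _ ≤ pinchingRatio (p ^ 4 * q ^ 2 / m ^ 3) :=
            antitoneOn_pinchingRatio hmem hupp_mem hupp
  · calc pinchingRatio (p ^ 4 * q ^ 2 / m ^ 3) ≤ pinchingRatio (q ^ 2 / p ^ 2) :=
          antitoneOn_pinchingRatio hlow_mem hmem hlow
      _ = 1 / 4 + 3 / 4 * ((p ^ 2 - q ^ 2) / (p ^ 2 + q ^ 2)) :=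
          pinchingRatio_div hp2.ne' (by positivity)

/-- Pinching bounds for `O_{p,q}(1)` in the case `q ≤ p` (Lemma 6.4): with
`k(m) = (4 − 2p⁴q²/m³)/(4 + 4p⁴q²/m³)` and `q² ≤ m ≤ p²`,
`1/4 − (3/4)(p⁴ − q⁴)/(p⁴ + q⁴) ≤ k(m) ≤ 1/4 + (3/4)(p² − q²)/(p² + q²)`. -/
theorem pinching_bounds_q_le_p (p q : ℝ) (hp : 0 < p) (hq : 0 < q) (hqp : q ≤ p)
    (h₁ : p ^ 2 < Real.sqrt 2 * q ^ 2) (h₂ : Real.sqrt 2 * q ^ 2 < 2 * Real.sqrt 2 * p ^ 2) :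
    ∀ m : ℝ, q ^ 2 ≤ m → m ≤ p ^ 2 →
      1 / 4 - 3 / 4 * ((p ^ 4 - q ^ 4) / (p ^ 4 + q ^ 4))
          ≤ (4 - 2 * p ^ 4 * q ^ 2 / m ^ 3) / (4 + 4 * p ^ 4 * q ^ 2 / m ^ 3) ∧
      (4 - 2 * p ^ 4 * q ^ 2 / m ^ 3) / (4 + 4 * p ^ 4 * q ^ 2 / m ^ 3)
          ≤ 1 / 4 + 3 / 4 * ((p ^ 2 - q ^ 2) / (p ^ 2 + q ^ 2)) :=
  pinching_bounds_q_le_p_general p q hq
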